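/- Let G = K_{n₁,…,n_k} with k ≥ 2, n > k, G not a star, and H a minimum hitting set of the canonical line-bramble for a vertex v in a largest colour class. Then |H| ≤ (1/2)·∑_{1≤i<j≤k} n_i n_j + (1/2)n(k+1) + (1/4)k(k−1) − 1. -/

import Mathlib

open SimpleGraph

/-- A tree decomposition of a graph `G`. -/
structure TreeDecomp {V : Type} (G : SimpleGraph V) where
  ι : Type
  T : SimpleGraph ι
  connected : T.Connected
  acyclic : T.IsAcyclic
  bag : ι → Finset V
  mem_bag : ∀ v : V, ∃ i, v ∈ bag i
  adj_bag : ∀ u v : V, G.Adj u v → ∃ i, u ∈ bag i ∧ v ∈ bag i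
  coherent : ∀ v : V, (T.induce {i | v ∈ bag i}).Connected

/-- `G` has a tree decomposition of width at most `w`. -/
def HasTreewidthLE {V : Type} (G : SimpleGraph V) (w : ℕ) : Prop :=
  ∃ D : TreeDecomp G, ∀ i, (D.bag i).card ≤ w + 1

/-- The treewidth of `G`. -/
noncomputable def treewidth {V : Type} (G : SimpleGraph V) : ℕ :=
  sInf {w | HasTreewidthLE G w}

/-- `G` has a path decomposition of width at most `w`: bags indexed by `Fin m`,
bags containing a fixed vertex are consecutive. -/
def HasPathwidthLE {V : Type} (G : SimpleGraph V) (w : ℕ) : Prop :=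
  ∃ (m : ℕ) (bag : Fin m → Finset V),
    (∀ v : V, ∃ i, v ∈ bag i) ∧
    (∀ u v : V, G.Adj u v → ∃ i, u ∈ bag i ∧ v ∈ bag i) ∧
    (∀ (v : V) (i j l : Fin m), i ≤ j → j ≤ l → v ∈ bag i → v ∈ bag l → v ∈ bag j) ∧
    (∀ i, (bag i).card ≤ w + 1)

/-- The pathwidth of `G`. -/
noncomputable def pathwidth {V : Type} (G : SimpleGraph V) : ℕ :=
  sInf {w | HasPathwidthLE G w}

/-- A bramble of a graph `H`: a collection of (vertex sets of) connected subgraphs,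
pairwise touching. -/
def IsBramble {W : Type} (H : SimpleGraph W) (B : Set (Set W)) : Prop :=
  (∀ X ∈ B, (H.induce X).Connected) ∧
  (∀ X ∈ B, ∀ Y ∈ B, (X ∩ Y).Nonempty ∨ ∃ x ∈ X, ∃ y ∈ Y, H.Adj x y)

/-- A vertex set hitting every element of a bramble. -/
def IsBrambleHitting {W : Type} (B : Set (Set W)) (S : Finset W) : Prop :=
  ∀ X ∈ B, ∃ x ∈ S, x ∈ X

/-- The order of a bramble: minimum size of a hitting set. -/
noncomputable def brambleOrder {W : Type} (B : Set (Set W)) : ℕ :=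
  sInf {m | ∃ S : Finset W, IsBrambleHitting B S ∧ S.card = m}

/-- The bramble number of `H`. -/
noncomputable def brambleNumber {W : Type} (H : SimpleGraph W) : ℕ :=
  sSup {m | ∃ B : Set (Set W), IsBramble H B ∧ brambleOrder B = m}

/-- A line-bramble of `G`. -/
def IsLineBramble {V : Type} (G : SimpleGraph V) (B : Set G.Subgraph) : Prop :=
  (∀ X ∈ B, X.Connected ∧ 2 ≤ X.verts.ncard) ∧
  (∀ X ∈ B, ∀ Y ∈ B, (X.verts ∩ Y.verts).Nonempty)

/-- An edge set hitting every member of a line-bramble. -/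
def IsLBHitting {V : Type} (G : SimpleGraph V) (B : Set G.Subgraph)
    (F : Finset (Sym2 V)) : Prop :=
  ↑F ⊆ G.edgeSet ∧ ∀ X ∈ B, ∃ e ∈ F, e ∈ X.edgeSet

/-- `H` is a minimum hitting set of the line-bramble `B`. -/
def IsMinLBHitting {V : Type} (G : SimpleGraph V) (B : Set G.Subgraph)
    (H : Finset (Sym2 V)) : Prop :=
  IsLBHitting G B H ∧ ∀ F, IsLBHitting G B F → H.card ≤ F.card

/-- The order of a line-bramble: minimum size of a hitting edge set. -/
noncomputable def lineBrambleOrder {V : Type} (G : SimpleGraph V) (B : Set G.Subgraph) : ℕ :=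
  sInf {m | ∃ F : Finset (Sym2 V), IsLBHitting G B F ∧ F.card = m}

/-- The canonical line-bramble for `v` of `G`. -/
def canonicalLineBramble {V : Type} (G : SimpleGraph V) (v : V) : Set G.Subgraph :=
  {X | X.Connected ∧
    (Nat.card V < 2 * X.verts.ncard ∨ (2 * X.verts.ncard = Nat.card V ∧ v ∈ X.verts))}

/-- The support of the component of `w` in `G - H`. -/
def compSupp {V : Type} (G : SimpleGraph V) (H : Finset (Sym2 V)) (w : V) : Set V :=
  ((G.deleteEdges ↑H).connectedComponentMk w).supp

/-- `(H, Q)` is a labelling: `H` is a hitting set of the line-bramble `B`, and `Q`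
enumerates the components of `G - H` without repetition. -/
def IsLabelling {V : Type} (G : SimpleGraph V) (B : Set G.Subgraph)
    (H : Finset (Sym2 V)) {p : ℕ} (Q : Fin p → Set V) : Prop :=
  IsLBHitting G B H ∧ Function.Injective Q ∧
  (∀ i, ∃ w : V, Q i = compSupp G H w) ∧
  (∀ w : V, ∃ i, Q i = compSupp G H w)

/-- A good labelling: `|H|` minimum; then the sequence `|Q 0|, |Q 1|, …` lexicographically
maximum; then `v` in the component of highest possible index. -/
def IsGoodLabelling {V : Type} (G : SimpleGraph V) (B : Set G.Subgraph) (v : V)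
    (H : Finset (Sym2 V)) {p : ℕ} (Q : Fin p → Set V) : Prop :=
  IsLabelling G B H Q ∧
  (∀ F, IsLBHitting G B F → H.card ≤ F.card) ∧
  (∀ (H' : Finset (Sym2 V)) (p' : ℕ) (Q' : Fin p' → Set V),
      IsLabelling G B H' Q' → H'.card = H.card →
      ¬ List.Lex (· < ·) (List.ofFn fun i => (Q i).ncard) (List.ofFn fun i => (Q' i).ncard)) ∧
  (∀ (H' : Finset (Sym2 V)) (p' : ℕ) (Q' : Fin p' → Set V),
      IsLabelling G B H' Q' → H'.card = H.card →
      (List.ofFn fun i => (Q i).ncard) = (List.ofFn fun i => (Q' i).ncard) →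
      ∀ (i : Fin p) (j : Fin p'), v ∈ Q i → v ∈ Q' j → (j : ℕ) ≤ (i : ℕ))

lemma aux_walk_mono {V : Type} {G : SimpleGraph V} {X : G.Subgraph} {α : Type} {c : V → α}
    (h : ∀ x y : V, X.Adj x y → c x = c y) :
    ∀ {x y : X.verts} (_ : X.coe.Walk x y), c x.1 = c y.1 := by
  intro x y p
  induction p with
  | nil => rfl
  | cons ha _ ih => exact (h _ _ (by simpa using ha)).trans ih

lemma aux_hitting {V : Type} [Fintype V] [DecidableEq V] {G : SimpleGraph V}
    [DecidableRel G.Adj] (v : V) {α : Type} [DecidableEq α] (c : V → α)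
    (hfib : ∀ t : α, 2 * Set.ncard {x | c x = t} ≤ Nat.card V ∧
      (c v = t → 2 * Set.ncard {x | c x = t} < Nat.card V)) :
    IsLBHitting G (canonicalLineBramble G v)
      (G.edgeFinset.filter fun e => ¬ (e.map c).IsDiag) := by
  constructor
  · intro e he
    simp only [Finset.coe_filter, Set.mem_setOf_eq, Finset.mem_filter, mem_edgeFinset] at he
    exact he.1
  · intro X hX
    by_contra hcon
    push_neg at hcon
    have hmono : ∀ x y : V, X.Adj x y → c x = c y := by
      intro x y hxy
      by_contra hne
      have h1 : s(x,y) ∈ G.edgeFinset := by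
        rw [mem_edgeFinset]; exact X.adj_sub hxy
      have h2 : ¬ (Sym2.map c s(x,y)).IsDiag := by
        rw [Sym2.map_pair_eq, Sym2.isDiag_iff_proj_eq]; exact hne
      exact hcon s(x,y) (Finset.mem_filter.2 ⟨h1, h2⟩) (SimpleGraph.Subgraph.mem_edgeSet.2 hxy)
    obtain ⟨hXc, hcard⟩ := hX
    have hcc : X.coe.Connected := hXc
    obtain ⟨⟨w, hw⟩⟩ := hcc.nonempty
    have hsub : X.verts ⊆ {x | c x = c w} := by
      intro x hx
      obtain ⟨p⟩ := hcc.preconnected ⟨x, hx⟩ ⟨w, hw⟩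
      exact aux_walk_mono hmono p
    have hle := Set.ncard_le_ncard hsub (Set.toFinite _)
    have ht := hfib (c w)
    rcases hcard with h1 | ⟨h2, hv2⟩
    · omega
    · have := ht.2 (hsub hv2)
      omega

lemma fin_filter_lt_card {N a : ℕ} (h : a ≤ N) :
    (Finset.univ.filter fun j : Fin N => j.val < a).card = a := by
  rw [← Finset.card_range a]
  apply Finset.card_bij (fun j _ => j.val)
  · intro j hj; simp at hj ⊢; exact hj
  · intro j₁ _ j₂ _ hh; exact Fin.val_injective hh
  · intro m hm; simp at hm
    exact ⟨⟨m, lt_of_lt_of_le hm h⟩, by simp [hm], rfl⟩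

lemma class_val_filter_card {k : ℕ} (n : Fin k → ℕ) (i : Fin k) (p : ℕ → Prop)
    [DecidablePred p] :
    (Finset.univ.filter fun x : Σ i, Fin (n i) => x.1 = i ∧ p x.2.val).card
      = (Finset.univ.filter fun j : Fin (n i) => p j.val).card := by
  have : (Finset.univ.filter fun x : Σ i, Fin (n i) => x.1 = i ∧ p x.2.val)
      = (Finset.univ.filter fun j : Fin (n i) => p j.val).image (Sigma.mk i) := by
    ext ⟨x1, x2⟩
    simp only [Finset.mem_filter, Finset.mem_univ, true_and, Finset.mem_image]
    constructor
    · rintro ⟨rfl, hp⟩; exact ⟨x2, hp, rfl⟩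
    · rintro ⟨j, hp, hh⟩
      obtain ⟨rfl, h2⟩ := Sigma.mk.inj_iff.1 hh
      cases eq_of_heq h2
      exact ⟨rfl, hp⟩
  rw [this, Finset.card_image_of_injective _ sigma_mk_injective]

lemma filter_eq_eq {k : ℕ} :
    (Finset.univ.filter (fun q : Fin k × Fin k => ¬ q.1 < q.2 ∧ q.1 = q.2))
      = Finset.univ.filter (fun q : Fin k × Fin k => q.1 = q.2) := by
  apply Finset.filter_congr; intro q _; constructor
  · rintro ⟨-, h⟩; exact h
  · rintro h; exact ⟨by omega, h⟩

lemma filter_gt_eq {k : ℕ} :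
    (Finset.univ.filter (fun q : Fin k × Fin k => ¬ q.1 < q.2 ∧ ¬ q.1 = q.2))
      = Finset.univ.filter (fun q : Fin k × Fin k => q.2 < q.1) := by
  apply Finset.filter_congr; intro q _; constructor
  · rintro ⟨h1, h2⟩
    rcases lt_trichotomy q.1 q.2 with h | h | h
    · exact absurd h h1
    · exact absurd h h2
    · exact h
  · intro h
    have h1 : ¬ q.1 < q.2 := by omega
    have h2 : q.1 ≠ q.2 := by omega
    exact ⟨h1, h2⟩

lemma split_three {k : ℕ} (f : Fin k × Fin k → ℚ) :
    ∑ q : Fin k × Fin k, f q =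
      (∑ q ∈ Finset.univ.filter (fun q : Fin k × Fin k => q.1 < q.2), f q)
      + (∑ q ∈ Finset.univ.filter (fun q : Fin k × Fin k => q.1 = q.2), f q)
      + (∑ q ∈ Finset.univ.filter (fun q : Fin k × Fin k => q.2 < q.1), f q) := by
  rw [← Finset.sum_filter_add_sum_filter_not Finset.univ (fun q : Fin k × Fin k => q.1 < q.2) f]
  rw [← Finset.sum_filter_add_sum_filter_not
    (Finset.univ.filter (fun q : Fin k × Fin k => ¬ q.1 < q.2)) (fun q => q.1 = q.2) f]
  rw [Finset.filter_filter, Finset.filter_filter, filter_eq_eq, filter_gt_eq, add_assoc]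

lemma sum_diag_eq {k : ℕ} (f : Fin k → Fin k → ℚ) :
    (∑ q ∈ Finset.univ.filter (fun q : Fin k × Fin k => q.1 = q.2), f q.1 q.2)
      = ∑ i, f i i := by
  apply Finset.sum_nbij' (fun q => q.1) (fun i => (i, i))
  · intro q hq; simp
  · intro i _; simp
  · intro q hq; simp at hq; obtain ⟨q1, q2⟩ := q; simp at hq; simp [hq]
  · intro i _; rfl
  · intro q hq; simp at hq; rw [← hq]

lemma sum_swap_eq {k : ℕ} (f : Fin k → Fin k → ℚ) :
    (∑ q ∈ Finset.univ.filter (fun q : Fin k × Fin k => q.2 < q.1), f q.1 q.2)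
      = ∑ q ∈ Finset.univ.filter (fun q : Fin k × Fin k => q.1 < q.2), f q.2 q.1 := by
  apply Finset.sum_nbij' Prod.swap Prod.swap
  · intro q hq; simp at hq ⊢; exact hq
  · intro q hq; simp at hq ⊢; exact hq
  · intro q _; simp
  · intro q _; simp
  · intro q _; simp

lemma card_lt_pairs {k : ℕ} :
    2 * (Finset.univ.filter (fun q : Fin k × Fin k => q.1 < q.2)).card + k = k * k := by
  have h1 : (Finset.univ.filter (fun q : Fin k × Fin k => q.2 < q.1)).card
      = (Finset.univ.filter (fun q : Fin k × Fin k => q.1 < q.2)).card := by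
    apply Finset.card_bij (fun q _ => Prod.swap q)
    · intro q hq; simp at hq ⊢; exact hq
    · intro q1 _ q2 _ h; exact Prod.swap_injective h
    · intro q hq; simp at hq; exact ⟨Prod.swap q, by simpa using hq, by simp⟩
  have h2 : (Finset.univ.filter (fun q : Fin k × Fin k => q.1 = q.2)).card = k := by
    have := sum_diag_eq (k := k) (fun _ _ => (1:ℚ))
    simp at this
    exact_mod_cast this
  have h3 := Finset.card_filter_add_card_filter_not
    (s := (Finset.univ : Finset (Fin k × Fin k))) (fun q : Fin k × Fin k => q.1 < q.2)
  have h4 := Finset.card_filter_add_card_filter_not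
    (s := Finset.univ.filter (fun q : Fin k × Fin k => ¬ q.1 < q.2))
    (fun q : Fin k × Fin k => q.1 = q.2)
  rw [Finset.filter_filter, Finset.filter_filter, filter_eq_eq, filter_gt_eq] at h4
  have h5 : (Finset.univ : Finset (Fin k × Fin k)).card = k * k := by
    simp [Finset.card_univ]
  omega


lemma pair_bound (A1 B1 N1 A2 B2 N2 : ℚ) (h1 : A1 + B1 = N1) (h2 : A2 + B2 = N2)
    (d1 : -1 ≤ A1 - B1) (d1' : A1 - B1 ≤ 1) (d2 : -1 ≤ A2 - B2) (d2' : A2 - B2 ≤ 1) :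
    A1 * B2 + A2 * B1 ≤ (1/2) * (N1 * N2) + 1/2 := by
  subst h1 h2
  have key : -1 ≤ (A1 - B1) * (A2 - B2) := by
    nlinarith [mul_nonneg (by linarith : (0:ℚ) ≤ 1 + (A1 - B1)) (by linarith : (0:ℚ) ≤ 1 + (A2 - B2)),
      mul_nonneg (by linarith : (0:ℚ) ≤ 1 - (A1 - B1)) (by linarith : (0:ℚ) ≤ 1 - (A2 - B2))]
  nlinarith [key]

lemma cross_bound {k : ℕ} (n a b : Fin k → ℕ)
    (hab : ∀ i, a i + b i = n i) (hbal : ∀ i, n i ≤ 2 * a i + 1 ∧ 2 * a i ≤ n i + 1) :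
    ((∑ i, a i : ℕ) * (∑ i, b i : ℕ) : ℚ) - ((∑ i, a i * b i : ℕ) : ℚ) ≤
      (1/2) * (∑ q ∈ Finset.univ.filter (fun q : Fin k × Fin k => q.1 < q.2),
        (n q.1 : ℚ) * (n q.2 : ℚ)) + (1/4) * (k : ℚ) * (k : ℚ) - (1/4) * (k : ℚ) := by
  have key : ((∑ i, a i : ℕ) * (∑ i, b i : ℕ) : ℚ) - ((∑ i, a i * b i : ℕ) : ℚ)
      = ∑ q ∈ Finset.univ.filter (fun q : Fin k × Fin k => q.1 < q.2),
          ((a q.1 : ℚ) * b q.2 + (a q.2 : ℚ) * b q.1) := by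
    push_cast
    rw [Finset.sum_mul_sum]
    have : (∑ i, ∑ j, (a i : ℚ) * (b j : ℚ)) = ∑ q : Fin k × Fin k, (a q.1 : ℚ) * b q.2 := by
      rw [Fintype.sum_prod_type]
    rw [this, split_three (fun q => (a q.1 : ℚ) * b q.2),
      sum_diag_eq (fun i j => (a i : ℚ) * b j), sum_swap_eq (fun i j => (a i : ℚ) * b j),
      Finset.sum_add_distrib]
    ring
  rw [key]
  have hle : ∀ q ∈ Finset.univ.filter (fun q : Fin k × Fin k => q.1 < q.2),
      (a q.1 : ℚ) * b q.2 + (a q.2 : ℚ) * b q.1 ≤ (1/2) * ((n q.1 : ℚ) * n q.2) + 1/2 := by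
    intro q _
    have e1 : ((a q.1 : ℚ)) + b q.1 = n q.1 := by exact_mod_cast hab q.1
    have e2 : ((a q.2 : ℚ)) + b q.2 = n q.2 := by exact_mod_cast hab q.2
    have g1 : b q.1 ≤ a q.1 + 1 := by have h := hab q.1; have h' := hbal q.1; omega
    have g1' : a q.1 ≤ b q.1 + 1 := by have h := hab q.1; have h' := hbal q.1; omega
    have g2 : b q.2 ≤ a q.2 + 1 := by have h := hab q.2; have h' := hbal q.2; omega
    have g2' : a q.2 ≤ b q.2 + 1 := by have h := hab q.2; have h' := hbal q.2; omega
    have c1 : (b q.1 : ℚ) ≤ a q.1 + 1 := by exact_mod_cast g1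
    have c1' : (a q.1 : ℚ) ≤ b q.1 + 1 := by exact_mod_cast g1'
    have c2 : (b q.2 : ℚ) ≤ a q.2 + 1 := by exact_mod_cast g2
    have c2' : (a q.2 : ℚ) ≤ b q.2 + 1 := by exact_mod_cast g2'
    exact pair_bound _ _ _ _ _ _ e1 e2 (by linarith) (by linarith) (by linarith) (by linarith)
  calc _ ≤ ∑ q ∈ Finset.univ.filter (fun q : Fin k × Fin k => q.1 < q.2),
        ((1/2) * ((n q.1 : ℚ) * n q.2) + 1/2) := Finset.sum_le_sum hle
    _ = (1/2) * (∑ q ∈ Finset.univ.filter (fun q : Fin k × Fin k => q.1 < q.2),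
        (n q.1 : ℚ) * (n q.2 : ℚ))
        + ((Finset.univ.filter (fun q : Fin k × Fin k => q.1 < q.2)).card : ℚ) * (1/2) := by
      rw [Finset.sum_add_distrib, Finset.mul_sum, Finset.sum_const, nsmul_eq_mul]
    _ ≤ _ := by
      have h := card_lt_pairs (k := k)
      have h6 : ((2 * (Finset.univ.filter (fun q : Fin k × Fin k => q.1 < q.2)).card + k : ℕ) : ℚ)
          = ((k * k : ℕ) : ℚ) := by rw [h]
      push_cast at h6
      linarith


abbrev MPV (k : ℕ) (n : Fin k → ℕ) : Type := Σ i : Fin k, Fin (n i)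

set_option maxHeartbeats 2000000 in
lemma key_lemma (k : ℕ) (hk : 2 ≤ k) (n : Fin k → ℕ) (hpos : ∀ i, 1 ≤ n i)
    (hnk : k < ∑ i, n i) (hstar : ¬ (k = 2 ∧ ∃ i, n i = 1))
    (v : MPV k n) (hv : ∀ i, n i ≤ n v.1) :
    ∃ F : Finset (Sym2 (MPV k n)),
      IsLBHitting (completeMultipartiteGraph (fun i : Fin k => Fin (n i)))
        (canonicalLineBramble (completeMultipartiteGraph (fun i : Fin k => Fin (n i))) v) F ∧
      (F.card : ℚ) ≤
        ((1 : ℚ) / 2) * (∑ q ∈ Finset.univ.filter (fun q : Fin k × Fin k => q.1 < q.2),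
          (n q.1 : ℚ) * (n q.2 : ℚ)) +
        (1 / 2) * ((∑ i, n i : ℕ) : ℚ) * ((k : ℚ) + 1) +
        (1 / 4) * (k : ℚ) * ((k : ℚ) - 1) - 1 := by
  classical
  haveI hdec : DecidableRel (completeMultipartiteGraph (fun i : Fin k => Fin (n i))).Adj :=
    fun x y => inferInstanceAs (Decidable (x.1 ≠ y.1))
  have hcardV : Fintype.card (MPV k n) = ∑ i, n i := by
    simp [MPV, Fintype.card_sigma]
  have hNV : Nat.card (MPV k n) = ∑ i, n i := by rw [Nat.card_eq_fintype_card, hcardV]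
  have hnv : 2 ≤ n v.1 := by
    by_contra h
    push_neg at h
    have h1 : ∀ i, n i ≤ 1 := fun i => le_trans (hv i) (by omega)
    have hle : ∑ i, n i ≤ ∑ _i : Fin k, 1 := Finset.sum_le_sum (fun i _ => h1 i)
    simp at hle
    omega
  have hn4 : 4 ≤ ∑ i, n i := by
    by_cases hone : ∃ i, n i = 1
    · have hk3 : 3 ≤ k := by
        rcases Nat.lt_or_ge k 3 with h | h
        · interval_cases k
          · exact absurd ⟨rfl, hone⟩ hstar
        · exact h
      omega
    · push_neg at hone
      have h2 : ∀ i, 2 ≤ n i := fun i => by have := hpos i; have := hone i; omega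
      have hle : ∑ _i : Fin k, 2 ≤ ∑ i, n i := Finset.sum_le_sum (fun i _ => h2 i)
      simp at hle
      omega
  -- the balanced split sizes
  obtain ⟨S, hS, hScard⟩ := Finset.exists_subset_card_eq
    (s := Finset.univ.filter fun i : Fin k => n i % 2 = 1)
    (n := (Finset.univ.filter fun i : Fin k => n i % 2 = 1).card / 2) (Nat.div_le_self _ _)
  set aa : Fin k → ℕ := fun i => n i / 2 + if i ∈ S then 1 else 0 with haadef
  have hodd : ∀ i ∈ S, n i % 2 = 1 := fun i hi => (Finset.mem_filter.1 (hS hi)).2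
  have hbal : ∀ i, n i ≤ 2 * aa i + 1 ∧ 2 * aa i ≤ n i + 1 := by
    intro i
    by_cases h : i ∈ S
    · have := hodd i h; simp only [haadef, h, if_true]; omega
    · simp only [haadef, h, if_false]; omega
  have haan : ∀ i, aa i ≤ n i := fun i => by have := hbal i; omega
  have haav : 1 ≤ aa v.1 := by
    have h1 : 2 ≤ n v.1 := hnv
    have := hbal v.1
    omega
  have hsumaa : 2 * (∑ i, aa i) ≤ ∑ i, n i ∧ ∑ i, n i ≤ 2 * (∑ i, aa i) + 1 := by
    have h1 : ∑ i, aa i = (∑ i, n i / 2) + S.card := by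
      rw [haadef]
      rw [Finset.sum_add_distrib]
      congr 1
      rw [Finset.sum_ite_mem, Finset.univ_inter, Finset.sum_const, smul_eq_mul, mul_one]
    have h2 : ∑ i, n i = 2 * (∑ i, n i / 2)
        + (Finset.univ.filter fun i : Fin k => n i % 2 = 1).card := by
      have e2 : ∑ i, n i = ∑ i, (2 * (n i / 2) + n i % 2) :=
        Finset.sum_congr rfl (fun i _ => by omega)
      rw [e2, Finset.sum_add_distrib, ← Finset.mul_sum]
      congr 1
      rw [Finset.card_filter]
      exact Finset.sum_congr rfl
        (fun i _ => by rcases Nat.mod_two_eq_zero_or_one (n i) with h | h <;> simp [h])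
    omega
  -- the swap and the side function
  set v₀ : MPV k n := ⟨v.1, ⟨0, by omega⟩⟩ with hv₀def
  set σ : Equiv.Perm (MPV k n) := Equiv.swap v v₀ with hσdef
  have hσfst : ∀ x : MPV k n, (σ x).1 = x.1 := by
    intro x
    by_cases h1 : x = v
    · subst h1; rw [hσdef, Equiv.swap_apply_left]
    · by_cases h2 : x = v₀
      · subst h2; rw [hσdef, Equiv.swap_apply_right]
      · rw [hσdef, Equiv.swap_apply_of_ne_of_ne h1 h2]
  have hσσ : ∀ x : MPV k n, σ (σ x) = x := by
    intro x
    rw [hσdef]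
    exact Equiv.swap_apply_self _ _ _
  set side : MPV k n → Bool := fun x => decide ((σ x).2.val < aa ((σ x).1)) with hsidedef
  have hsidev : side v = true := by
    have h1 : σ v = v₀ := by rw [hσdef]; exact Equiv.swap_apply_left _ _
    have hsv2 : ((σ v).2 : ℕ) = 0 := by rw [h1]
    have hsv1 : aa ((σ v).1) = aa v.1 := congrArg aa (hσfst v)
    show decide (((σ v).2 : ℕ) < aa ((σ v).1)) = true
    rw [decide_eq_true_iff, hsv2, hsv1]
    omega
  -- per-class counts
  set a : Fin k → ℕ :=
    fun i => (Finset.univ.filter fun x : MPV k n => x.1 = i ∧ side x = true).card with hadef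
  set b : Fin k → ℕ :=
    fun i => (Finset.univ.filter fun x : MPV k n => x.1 = i ∧ side x = false).card with hbdef
  have hclass : ∀ i, (Finset.univ.filter fun x : MPV k n => x.1 = i).card = n i := by
    intro i
    have h := class_val_filter_card n i (fun _ => True)
    simpa using h
  have hab : ∀ i, a i + b i = n i := by
    intro i
    have h := Finset.card_filter_add_card_filter_not
      (s := Finset.univ.filter fun x : MPV k n => x.1 = i) (p := fun x => side x = true)
    rw [Finset.filter_filter, Finset.filter_filter, hclass i] at h
    have e2 : (Finset.univ.filter fun x : MPV k n => x.1 = i ∧ ¬ side x = true)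
        = Finset.univ.filter fun x : MPV k n => x.1 = i ∧ side x = false := by
      apply Finset.filter_congr
      intro x _
      simp [Bool.not_eq_true]
    rw [e2] at h
    exact h
  have hacount : ∀ i, a i = aa i := by
    intro i
    have e1 : (Finset.univ.filter fun x : MPV k n => x.1 = i ∧ side x = true)
        = Finset.univ.filter fun x : MPV k n => x.1 = i ∧ (σ x).2.val < aa i := by
      apply Finset.filter_congr
      intro x _
      constructor
      · rintro ⟨h1, h2⟩
        have hx2 : aa ((σ x).1) = aa i := by rw [hσfst x, h1]
        refine ⟨h1, ?_⟩
        replace h2 : decide (((σ x).2 : ℕ) < aa ((σ x).1)) = true := h2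
        rw [decide_eq_true_iff, hx2] at h2
        exact h2
      · rintro ⟨h1, h2⟩
        have hx2 : aa ((σ x).1) = aa i := by rw [hσfst x, h1]
        refine ⟨h1, ?_⟩
        show decide (((σ x).2 : ℕ) < aa ((σ x).1)) = true
        rw [decide_eq_true_iff, hx2]
        exact h2
    have e2 : (Finset.univ.filter fun x : MPV k n => x.1 = i ∧ (σ x).2.val < aa i).card
        = (Finset.univ.filter fun y : MPV k n => y.1 = i ∧ y.2.val < aa i).card := by
      apply Finset.card_nbij' (fun x => σ x) (fun y => σ y)
      · intro x hx
        simp only [Finset.mem_coe, Finset.mem_filter, Finset.mem_univ, true_and] at hx ⊢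
        exact ⟨(hσfst x).trans hx.1, hx.2⟩
      · intro y hy
        simp only [Finset.mem_coe, Finset.mem_filter, Finset.mem_univ, true_and] at hy ⊢
        refine ⟨(hσfst y).trans hy.1, ?_⟩
        rw [hσσ y]
        exact hy.2
      · intro x _; exact hσσ x
      · intro y _; exact hσσ y
    rw [hadef]
    simp only []
    rw [e1, e2, class_val_filter_card n i (fun t => t < aa i), fin_filter_lt_card (haan i)]
  
  -- the two sides
  set Af := Finset.univ.filter (fun x : MPV k n => side x = true) with hAfdef
  set Bf := Finset.univ.filter (fun x : MPV k n => side x = false) with hBfdef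
  have hAfcard : Af.card = ∑ i, a i := by
    rw [Finset.card_eq_sum_card_fiberwise (f := Sigma.fst) (t := Finset.univ)
      (fun x _ => Finset.mem_univ _)]
    refine Finset.sum_congr rfl (fun i _ => ?_)
    rw [hAfdef, Finset.filter_filter]
    congr 1
    apply Finset.filter_congr
    intro x _
    exact and_comm
  have hBfcard : Bf.card = ∑ i, b i := by
    rw [Finset.card_eq_sum_card_fiberwise (f := Sigma.fst) (t := Finset.univ)
      (fun x _ => Finset.mem_univ _)]
    refine Finset.sum_congr rfl (fun i _ => ?_)
    rw [hBfdef, Finset.filter_filter]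
    congr 1
    apply Finset.filter_congr
    intro x _
    exact and_comm
  have hsumab : (∑ i, a i) + (∑ i, b i) = ∑ i, n i := by
    rw [← Finset.sum_add_distrib]
    exact Finset.sum_congr rfl (fun i _ => hab i)
  have hsumaA : ∑ i, a i = ∑ i, aa i := Finset.sum_congr rfl (fun i _ => hacount i)
  have hvAf : v ∈ Af := by
    rw [hAfdef, Finset.mem_filter]
    exact ⟨Finset.mem_univ _, hsidev⟩
  -- choice of u
  obtain ⟨u, huv, hucase⟩ : ∃ u : MPV k n, u ≠ v ∧
      ((side u = true ∧ 2 * Af.card = ∑ i, n i) ∨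
        (side u = false ∧ 2 * Af.card + 1 = ∑ i, n i)) := by
    by_cases hpar : (∑ i, n i) % 2 = 0
    · have h2A : 2 * Af.card = ∑ i, n i := by
        rw [hAfcard, hsumaA]; omega
      have hA2 : 1 < Af.card := by omega
      obtain ⟨u, huA, hune⟩ := Finset.exists_mem_ne hA2 v
      rw [hAfdef, Finset.mem_filter] at huA
      exact ⟨u, hune, Or.inl ⟨huA.2, h2A⟩⟩
    · have h2A : 2 * Af.card + 1 = ∑ i, n i := by
        rw [hAfcard, hsumaA]; omega
      have hB1 : 0 < Bf.card := by
        have := hAfcard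
        have := hBfcard
        omega
      obtain ⟨u, huB⟩ := Finset.card_pos.1 hB1
      rw [hBfdef, Finset.mem_filter] at huB
      refine ⟨u, ?_, Or.inr ⟨huB.2, h2A⟩⟩
      intro h
      rw [h, hsidev] at huB
      exact absurd huB.2 (by simp)
  -- the three-block colouring
  set c : MPV k n → Fin 3 :=
    fun x => if x = u then 2 else if side x = true then 0 else 1 with hcdef
  have hcu : c u = 2 := by rw [hcdef]; simp
  have hcT : ∀ x, x ≠ u → side x = true → c x = 0 := by
    intro x h1 h2; rw [hcdef]; simp [h1, h2]
  have hcF : ∀ x, x ≠ u → side x = false → c x = 1 := by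
    intro x h1 h2; rw [hcdef]; simp [h1, h2]
  have hcv : c v = 0 := hcT v (Ne.symm huv) hsidev
  -- fibers
  have hf0 : (Finset.univ.filter fun x : MPV k n => c x = 0) = Af.erase u := by
    ext x
    rw [Finset.mem_filter, Finset.mem_erase, hAfdef, Finset.mem_filter]
    constructor
    · rintro ⟨-, h⟩
      by_cases hxu : x = u
      · rw [hxu, hcu] at h; exact absurd h (by decide)
      · cases hsx : side x
        · rw [hcF x hxu hsx] at h; exact absurd h (by decide)
        · exact ⟨hxu, Finset.mem_univ _, rfl⟩
    · rintro ⟨h1, -, h2⟩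
      exact ⟨Finset.mem_univ _, hcT x h1 h2⟩
  have hf1 : (Finset.univ.filter fun x : MPV k n => c x = 1) = Bf.erase u := by
    ext x
    rw [Finset.mem_filter, Finset.mem_erase, hBfdef, Finset.mem_filter]
    constructor
    · rintro ⟨-, h⟩
      by_cases hxu : x = u
      · rw [hxu, hcu] at h; exact absurd h (by decide)
      · cases hsx : side x
        · exact ⟨hxu, Finset.mem_univ _, rfl⟩
        · rw [hcT x hxu hsx] at h; exact absurd h (by decide)
    · rintro ⟨h1, -, h2⟩
      exact ⟨Finset.mem_univ _, hcF x h1 h2⟩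
  have hf2 : (Finset.univ.filter fun x : MPV k n => c x = 2) = {u} := by
    ext x
    rw [Finset.mem_filter, Finset.mem_singleton]
    constructor
    · rintro ⟨-, h⟩
      by_cases hxu : x = u
      · exact hxu
      · cases hsx : side x
        · rw [hcF x hxu hsx] at h; exact absurd h (by decide)
        · rw [hcT x hxu hsx] at h; exact absurd h (by decide)
    · intro h
      exact ⟨Finset.mem_univ _, by rw [h, hcu]⟩
  have hnc : ∀ t : Fin 3, {x : MPV k n | c x = t}.ncard
      = (Finset.univ.filter fun x : MPV k n => c x = t).card := by
    intro t
    rw [Set.ncard_eq_toFinset_card', Set.toFinset_setOf]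
  have huAf : side u = true → u ∈ Af := by
    intro h; rw [hAfdef, Finset.mem_filter]; exact ⟨Finset.mem_univ _, h⟩
  have huBf : side u = false → u ∈ Bf := by
    intro h; rw [hBfdef, Finset.mem_filter]; exact ⟨Finset.mem_univ _, h⟩
  have hunotAf : side u = false → u ∉ Af := by
    intro h hmem; rw [hAfdef, Finset.mem_filter] at hmem; rw [h] at hmem
    exact absurd hmem.2 (by simp)
  have hunotBf : side u = true → u ∉ Bf := by
    intro h hmem; rw [hBfdef, Finset.mem_filter] at hmem; rw [h] at hmem
    exact absurd hmem.2 (by simp)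
  have hABN : Af.card + Bf.card = ∑ i, n i := by rw [hAfcard, hBfcard]; exact hsumab
  have cond0 : 2 * (Finset.univ.filter fun x : MPV k n => c x = 0).card ≤ ∑ i, n i ∧
      (c v = 0 → 2 * (Finset.univ.filter fun x : MPV k n => c x = 0).card < ∑ i, n i) := by
    rw [hf0]
    rcases hucase with ⟨hsu, hcard⟩ | ⟨hsu, hcard⟩
    · rw [Finset.card_erase_of_mem (huAf hsu)]
      exact ⟨by omega, fun _ => by omega⟩
    · rw [Finset.erase_eq_of_notMem (hunotAf hsu)]
      exact ⟨by omega, fun _ => by omega⟩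
  have cond1 : 2 * (Finset.univ.filter fun x : MPV k n => c x = 1).card ≤ ∑ i, n i ∧
      (c v = 1 → 2 * (Finset.univ.filter fun x : MPV k n => c x = 1).card < ∑ i, n i) := by
    rw [hf1]
    have hv1 : c v = 1 → False := by rw [hcv]; decide
    rcases hucase with ⟨hsu, hcard⟩ | ⟨hsu, hcard⟩
    · rw [Finset.erase_eq_of_notMem (hunotBf hsu)]
      exact ⟨by omega, fun h => absurd h hv1⟩
    · rw [Finset.card_erase_of_mem (huBf hsu)]
      exact ⟨by omega, fun h => absurd h hv1⟩
  have cond2 : 2 * (Finset.univ.filter fun x : MPV k n => c x = 2).card ≤ ∑ i, n i ∧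
      (c v = 2 → 2 * (Finset.univ.filter fun x : MPV k n => c x = 2).card < ∑ i, n i) := by
    rw [hf2, Finset.card_singleton]
    exact ⟨by omega, fun _ => by omega⟩
  have hfib : ∀ t : Fin 3, 2 * {x : MPV k n | c x = t}.ncard ≤ Nat.card (MPV k n) ∧
      (c v = t → 2 * {x : MPV k n | c x = t}.ncard < Nat.card (MPV k n)) := by
    intro t
    rw [hNV, hnc t]
    fin_cases t
    · exact cond0
    · exact cond1
    · exact cond2
  -- the hitting set
  
  -- counting
  set G := completeMultipartiteGraph (fun i : Fin k => Fin (n i)) with hGdef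
  set F := G.edgeFinset.filter (fun e => ¬ (Sym2.map c e).IsDiag) with hFdef
  set Fcross := G.edgeFinset.filter (fun e => ¬ (Sym2.map side e).IsDiag) with hFcrossdef
  set star := G.edgeFinset.filter (fun e => u ∈ e) with hstardef
  have hadjne : ∀ {x y : MPV k n}, G.Adj x y → x.1 ≠ y.1 := by
    intro x y h
    exact h
  have hsubF : F ⊆ Fcross ∪ star := by
    intro e he
    rw [hFdef, Finset.mem_filter] at he
    obtain ⟨he1, he2⟩ := he
    rw [Finset.mem_union]
    induction e using Sym2.ind with
    | _ x y =>
      rw [Sym2.map_pair_eq, Sym2.isDiag_iff_proj_eq] at he2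
      by_cases hxu : x = u
      · right
        rw [hstardef, Finset.mem_filter]
        exact ⟨he1, by rw [hxu]; exact Sym2.mem_mk_left u y⟩
      by_cases hyu : y = u
      · right
        rw [hstardef, Finset.mem_filter]
        exact ⟨he1, by rw [hyu]; exact Sym2.mem_mk_right x u⟩
      · left
        rw [hFcrossdef, Finset.mem_filter]
        refine ⟨he1, ?_⟩
        rw [Sym2.map_pair_eq, Sym2.isDiag_iff_proj_eq]
        intro hss
        apply he2
        cases hsx : side x
        · cases hsy : side y
          · rw [hcF x hxu hsx, hcF y hyu hsy]
          · rw [hsx, hsy] at hss; exact absurd hss (by decide)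
        · cases hsy : side y
          · rw [hsx, hsy] at hss; exact absurd hss (by decide)
          · rw [hcT x hxu hsx, hcT y hyu hsy]
  have hstarcard : star.card < ∑ i, n i := by
    have hse : star = G.incidenceFinset u := by
      ext e
      rw [hstardef, Finset.mem_filter, SimpleGraph.mem_incidenceFinset]
      rw [SimpleGraph.mem_edgeFinset]
      exact Iff.rfl
    rw [hse, SimpleGraph.card_incidenceFinset_eq_degree, ← hcardV]
    exact G.degree_lt_card_verts u
  set Pf := (Af ×ˢ Bf).filter (fun p => ¬ p.1.1 = p.2.1) with hPfdef
  set Qf := (Af ×ˢ Bf).filter (fun p => p.1.1 = p.2.1) with hQfdef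
  have hFcP : Fcross ⊆ Pf.image (fun p => s(p.1, p.2)) := by
    intro e he
    rw [hFcrossdef, Finset.mem_filter] at he
    obtain ⟨he1, he2⟩ := he
    rw [Finset.mem_image]
    induction e using Sym2.ind with
    | _ x y =>
      rw [Sym2.map_pair_eq, Sym2.isDiag_iff_proj_eq] at he2
      have hadj : x.1 ≠ y.1 := hadjne (G.mem_edgeSet.1 (SimpleGraph.mem_edgeFinset.1 he1))
      cases hsx : side x
      · have hsy : side y = true := by
          cases hsy : side y
          · rw [hsx, hsy] at he2; exact absurd rfl he2
          · rfl
        refine ⟨(y, x), ?_, Sym2.eq_swap⟩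
        rw [hPfdef, Finset.mem_filter, Finset.mem_product]
        refine ⟨⟨?_, ?_⟩, ?_⟩
        · rw [hAfdef, Finset.mem_filter]; exact ⟨Finset.mem_univ _, hsy⟩
        · rw [hBfdef, Finset.mem_filter]; exact ⟨Finset.mem_univ _, hsx⟩
        · exact fun h => hadj h.symm
      · have hsy : side y = false := by
          cases hsy : side y
          · rfl
          · rw [hsx, hsy] at he2; exact absurd rfl he2
        refine ⟨(x, y), ?_, rfl⟩
        rw [hPfdef, Finset.mem_filter, Finset.mem_product]
        refine ⟨⟨?_, ?_⟩, ?_⟩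
        · rw [hAfdef, Finset.mem_filter]; exact ⟨Finset.mem_univ _, hsx⟩
        · rw [hBfdef, Finset.mem_filter]; exact ⟨Finset.mem_univ _, hsy⟩
        · exact hadj
  have hFcrosscard : Fcross.card ≤ Pf.card :=
    le_trans (Finset.card_le_card hFcP) Finset.card_image_le
  have hPQ : Qf.card + Pf.card = Af.card * Bf.card := by
    have h := Finset.card_filter_add_card_filter_not
      (s := Af ×ˢ Bf) (p := fun p : MPV k n × MPV k n => p.1.1 = p.2.1)
    rw [Finset.card_product] at h
    exact h
  have hQfcard : Qf.card = ∑ i, a i * b i := by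
    have hQeq : Qf = Finset.univ.biUnion (fun i : Fin k =>
        (Finset.univ.filter fun x : MPV k n => x.1 = i ∧ side x = true) ×ˢ
        (Finset.univ.filter fun x : MPV k n => x.1 = i ∧ side x = false)) := by
      ext p
      obtain ⟨p1, p2⟩ := p
      rw [hQfdef, Finset.mem_filter, Finset.mem_product, Finset.mem_biUnion]
      rw [hAfdef, hBfdef, Finset.mem_filter, Finset.mem_filter]
      constructor
      · rintro ⟨⟨⟨-, h1⟩, -, h2⟩, h3⟩
        refine ⟨p1.1, Finset.mem_univ _, ?_⟩
        rw [Finset.mem_product, Finset.mem_filter, Finset.mem_filter]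
        exact ⟨⟨Finset.mem_univ _, rfl, h1⟩, Finset.mem_univ _, h3.symm, h2⟩
      · rintro ⟨i, -, hmem⟩
        rw [Finset.mem_product, Finset.mem_filter, Finset.mem_filter] at hmem
        obtain ⟨⟨-, h1, h2⟩, -, h3, h4⟩ := hmem
        exact ⟨⟨⟨Finset.mem_univ _, h2⟩, Finset.mem_univ _, h4⟩, by rw [h1, h3]⟩
    rw [hQeq, Finset.card_biUnion]
    · exact Finset.sum_congr rfl (fun i _ => by rw [Finset.card_product])
    · intro i _ j _ hij
      rw [Function.onFun, Finset.disjoint_left]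
      intro p hp hp2
      rw [Finset.mem_product, Finset.mem_filter, Finset.mem_filter] at hp hp2
      exact hij ((hp.1.2.1.symm).trans hp2.1.2.1)
  -- assemble
  have hcross := cross_bound n a b hab (fun i => by rw [hacount i]; exact hbal i)
  have hFcard : F.card ≤ (Fcross ∪ star).card := Finset.card_le_card hsubF
  have hFcard2 : F.card ≤ Fcross.card + star.card :=
    le_trans hFcard (Finset.card_union_le _ _)
  have hq1 : ((F.card : ℚ)) ≤ ((∑ i, a i : ℕ) : ℚ) * ((∑ i, b i : ℕ) : ℚ)
      - ((∑ i, a i * b i : ℕ) : ℚ) + ((∑ i, n i : ℕ) : ℚ) - 1 := by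
    have c1 : (F.card : ℚ) ≤ (Fcross.card : ℚ) + (star.card : ℚ) := by
      exact_mod_cast hFcard2
    have c2 : (star.card : ℚ) ≤ ((∑ i, n i : ℕ) : ℚ) - 1 := by
      have h1 : star.card + 1 ≤ ∑ i, n i := hstarcard
      have h2 : ((star.card : ℚ)) + 1 ≤ ((∑ i, n i : ℕ) : ℚ) := by exact_mod_cast h1
      linarith
    have c3 : (Fcross.card : ℚ) ≤ (Pf.card : ℚ) := by exact_mod_cast hFcrosscard
    have c4 : (Qf.card : ℚ) + (Pf.card : ℚ) = ((Af.card : ℕ) : ℚ) * ((Bf.card : ℕ) : ℚ) := by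
      exact_mod_cast hPQ
    have c5 : (Qf.card : ℚ) = ((∑ i, a i * b i : ℕ) : ℚ) := by exact_mod_cast hQfcard
    have c6 : ((Af.card : ℕ) : ℚ) = ((∑ i, a i : ℕ) : ℚ) := by exact_mod_cast hAfcard
    have c7 : ((Bf.card : ℕ) : ℚ) = ((∑ i, b i : ℕ) : ℚ) := by exact_mod_cast hBfcard
    rw [c6, c7] at c4
    linarith
  have hNk : (0:ℚ) ≤ ((∑ i, n i : ℕ) : ℚ) * ((k:ℚ) - 1) := by
    apply mul_nonneg (Nat.cast_nonneg _)
    have : (2:ℚ) ≤ (k:ℚ) := by exact_mod_cast hk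
    linarith
  have hstep2 : ((∑ i, a i : ℕ) : ℚ) * ((∑ i, b i : ℕ) : ℚ)
        - ((∑ i, a i * b i : ℕ) : ℚ) + ((∑ i, n i : ℕ) : ℚ) - 1
      ≤ ((1 : ℚ) / 2) * (∑ q ∈ Finset.univ.filter (fun q : Fin k × Fin k => q.1 < q.2),
          (n q.1 : ℚ) * (n q.2 : ℚ)) + (1/4) * (k : ℚ) * (k : ℚ) - (1/4) * (k : ℚ)
          + ((∑ i, n i : ℕ) : ℚ) - 1 := by
    push_cast at hcross ⊢
    linarith
  have hstep3 : ((1 : ℚ) / 2) * (∑ q ∈ Finset.univ.filter (fun q : Fin k × Fin k => q.1 < q.2),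
          (n q.1 : ℚ) * (n q.2 : ℚ)) + (1/4) * (k : ℚ) * (k : ℚ) - (1/4) * (k : ℚ)
          + ((∑ i, n i : ℕ) : ℚ) - 1
      ≤ ((1 : ℚ) / 2) * (∑ q ∈ Finset.univ.filter (fun q : Fin k × Fin k => q.1 < q.2),
          (n q.1 : ℚ) * (n q.2 : ℚ)) +
        (1 / 2) * ((∑ i, n i : ℕ) : ℚ) * ((k : ℚ) + 1) +
        (1 / 4) * (k : ℚ) * ((k : ℚ) - 1) - 1 := by
    linarith [hNk]
  have hitF : IsLBHitting G (canonicalLineBramble G v) F :=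
    aux_hitting (G := completeMultipartiteGraph (fun i : Fin k => Fin (n i))) v c hfib
  exact ⟨F, hitF, le_trans (le_trans hq1 hstep2) hstep3⟩

/-- upper bound on the size of a minimum hitting set of the canonical
line-bramble of a complete multipartite graph. -/
theorem multipartite_hitting_upper_bound (k : ℕ) (hk : 2 ≤ k) (n : Fin k → ℕ) (hpos : ∀ i, 1 ≤ n i)
    (hnk : k < ∑ i, n i) (hstar : ¬ (k = 2 ∧ ∃ i, n i = 1))
    (v : Σ i : Fin k, Fin (n i)) (hv : ∀ i, n i ≤ n v.1)
    (H : Finset (Sym2 (Σ i : Fin k, Fin (n i))))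
    (hmin : IsMinLBHitting (completeMultipartiteGraph (fun i : Fin k => Fin (n i)))
      (canonicalLineBramble (completeMultipartiteGraph (fun i : Fin k => Fin (n i))) v) H) :
    (H.card : ℚ) ≤
      ((1 : ℚ) / 2) * (∑ q ∈ Finset.univ.filter (fun q : Fin k × Fin k => q.1 < q.2),
        (n q.1 : ℚ) * (n q.2 : ℚ)) +
      (1 / 2) * ((∑ i, n i : ℕ) : ℚ) * ((k : ℚ) + 1) +
      (1 / 4) * (k : ℚ) * ((k : ℚ) - 1) - 1 := by
  obtain ⟨F, hF, hFb⟩ := key_lemma k hk n hpos hnk hstar v hv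
  have h1 : H.card ≤ F.card := hmin.2 F hF
  have h2 : (H.card : ℚ) ≤ (F.card : ℚ) := by exact_mod_cast h1
  exact le_trans h2 hFb
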